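/- Let s = b + c(p−1) and r = s + p^t(p−1)d with t ≥ 2, d ≥ 1, 2 ≤ b ≤ p, 0 ≤ c ≤ p−1, 0 ≤ m ≤ p−1, s ≥ m, and let l be an integer with 0 ≤ l ≤ m. Assume further 0 ≤ b−m ≤ c. Then: (1) ν_p( C(r−l, b−m) ) equals 0 if 0 ≤ l ≤ m−c, equals 1 if m−c+1 ≤ l ≤ b−c, and equals 0 if b−c+1 ≤ l ≤ b−c+p; and (2) the p-adic valuation of the rational number p^{2m−b} · C(r−l, b−m) / C(r−l, r−m) equals: 2m−b if m = b−c and 0 ≤ l ≤ m−c; 2m−b−1 if m ≥ b−c+1 and 0 ≤ l ≤ m−c; 2m−b+1 if m = b−c and m−c+1 ≤ l ≤ b−c; 2m−b if m ≥ b−c+1 and m−c+1 ≤ l ≤ b−c; 2m−b if m ≥ b−c+1 and b−c+1 ≤ l ≤ b−c+p. -/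

import Mathlib

/-- Binomial coefficient of integers with the convention `iC n k = 0` when `k < 0` or `k > n`. -/
def iC (n k : ℤ) : ℤ := if 0 ≤ k ∧ k ≤ n then (n.toNat.choose k.toNat : ℤ) else 0

/-! Write `r - l = a + p * Q` with `a = b - c - l` and `Q = c + p ^ (t - 1) * (p - 1) * d`, so
that `Q ≡ c (mod p)` because `t ≥ 2`. For `K < p`, Kummer's theorem (in Legendre's digit-sum form)
gives `ν_p (C(a + p Q, K)) = 0` when `K ≤ a < p`, since adding `K` and `a - K + p Q` produces no
carry, and `= 1` when `a < K` and `p ∤ Q`, since exactly one carry occurs. When `l > b - c` the same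
applies to `r - l = (a + p) + p (Q - 1)`. The denominator is `C(r - l, m - l)` by symmetry, and
both binomials are nonzero, so the valuation of the quotient is `2m - b + ν_p(num) - ν_p(den)`. -/

theorem Nat.digits_sum_add_mul {p : ℕ} (hp : 1 < p) {A : ℕ} (hA : A < p) (Q : ℕ) :
    (p.digits (A + p * Q)).sum = A + (p.digits Q).sum := by
  rcases eq_or_ne A 0 with rfl | hA0
  · rcases eq_or_ne Q 0 with rfl | hQ0
    · simp
    · rw [Nat.digits_add p hp 0 Q hA (Or.inr hQ0), List.sum_cons]
  · rw [Nat.digits_add p hp A Q hA (Or.inl hA0), List.sum_cons]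

theorem Nat.digits_sum_of_lt {p A : ℕ} (hp : 1 < p) (hA : A < p) : (p.digits A).sum = A := by
  simpa using Nat.digits_sum_add_mul hp hA 0

theorem iC_natCast (n k : ℕ) : iC n k = n.choose k := by
  unfold iC
  split_ifs with h
  · simp
  · rw [Nat.choose_eq_zero_of_lt (by omega), Nat.cast_zero]

theorem iC_ne_zero {n k : ℤ} (hk0 : 0 ≤ k) (hkn : k ≤ n) : iC n k ≠ 0 := by
  rw [iC, if_pos ⟨hk0, hkn⟩, Nat.cast_ne_zero]
  exact (Nat.choose_pos (by omega)).ne'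

theorem iC_symm {n k : ℤ} (hk0 : 0 ≤ k) (hkn : k ≤ n) : iC n (n - k) = iC n k := by
  lift n to ℕ using hk0.trans hkn
  lift k to ℕ using hk0
  rw [← Nat.cast_sub (by omega), iC_natCast, iC_natCast, Nat.choose_symm (by omega)]

section Kummer

variable {p : ℕ} [hp : Fact p.Prime]

theorem padicValNat_choose_add_mul_of_le {A K : ℕ} (hKA : K ≤ A) (hA : A < p) (Q : ℕ) :
    padicValNat p ((A + p * Q).choose K) = 0 := by
  have h := sub_one_mul_padicValNat_choose_eq_sub_sum_digits (p := p)
    (hKA.trans (Nat.le_add_right A (p * Q)))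
  rw [show A + p * Q - K = (A - K) + p * Q by omega, Nat.digits_sum_add_mul hp.out.one_lt hA,
    Nat.digits_sum_add_mul hp.out.one_lt (by omega),
    Nat.digits_sum_of_lt hp.out.one_lt (hKA.trans_lt hA)] at h
  have := hp.out.two_le
  simpa [show p - 1 ≠ 0 by omega] using h.trans (by omega : _ = 0)

theorem padicValNat_choose_add_mul_of_lt {A K Q : ℕ} (hAK : A < K) (hK : K < p) (hQ : ¬ p ∣ Q) :
    padicValNat p ((A + p * Q).choose K) = 1 := by
  obtain ⟨q, Q', hq0, hqp, rfl⟩ : ∃ q Q', 0 < q ∧ q < p ∧ Q = q + p * Q' :=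
    ⟨Q % p, Q / p, Nat.pos_of_ne_zero (mt Nat.dvd_of_mod_eq_zero hQ), Nat.mod_lt _ hp.out.pos,
      (Nat.mod_add_div Q p).symm⟩
  have hsub : A + p * (q + p * Q') - K = (A + p - K) + p * ((q - 1) + p * Q') := by
    have : p * (q + p * Q') = p + p * ((q - 1) + p * Q') := by
      obtain ⟨q, rfl⟩ := Nat.exists_eq_add_of_lt hq0
      simp only [zero_add, Nat.add_sub_cancel]
      ring
    omega
  have h := sub_one_mul_padicValNat_choose_eq_sub_sum_digits (p := p)
    (by omega : K ≤ A + p * (q + p * Q'))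
  rw [hsub, Nat.digits_sum_add_mul hp.out.one_lt (by omega),
    Nat.digits_sum_add_mul hp.out.one_lt (by omega), Nat.digits_sum_add_mul hp.out.one_lt (by omega),
    Nat.digits_sum_add_mul hp.out.one_lt hqp, Nat.digits_sum_of_lt hp.out.one_lt hK] at h
  have := hp.out.two_le
  exact Nat.eq_of_mul_eq_mul_left (by omega : 0 < p - 1) (h.trans (by omega))

theorem padicValInt_iC_add_mul_of_le {a K Q : ℤ} (hK0 : 0 ≤ K) (hKa : K ≤ a) (ha : a < p)
    (hQ : 0 ≤ Q) : padicValInt p (iC (a + p * Q) K) = 0 := by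
  lift a to ℕ using hK0.trans hKa
  lift K to ℕ using hK0
  lift Q to ℕ using hQ
  rw [← Nat.cast_mul, ← Nat.cast_add, iC_natCast, padicValInt.of_nat]
  exact padicValNat_choose_add_mul_of_le (by omega) (by omega) Q

theorem padicValInt_iC_add_mul_of_lt {a K Q : ℤ} (ha : 0 ≤ a) (haK : a < K) (hK : K < p)
    (hQ : 0 ≤ Q) (hpQ : ¬ (p : ℤ) ∣ Q) : padicValInt p (iC (a + p * Q) K) = 1 := by
  lift K to ℕ using ha.trans haK.le
  lift a to ℕ using ha
  lift Q to ℕ using hQ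
  rw [← Nat.cast_mul, ← Nat.cast_add, iC_natCast, padicValInt.of_nat]
  exact padicValNat_choose_add_mul_of_lt (by omega) (by omega) (by exact_mod_cast hpQ)

theorem padicValRat_zpow_mul_iC_div_iC {n j k : ℤ} (e : ℤ) (hj0 : 0 ≤ j) (hjn : j ≤ n)
    (hk0 : 0 ≤ k) (hkn : k ≤ n) :
    padicValRat p ((p : ℚ) ^ e * iC n j / iC n (n - k)) =
      e + padicValInt p (iC n j) - padicValInt p (iC n k) := by
  have hpe : (p : ℚ) ^ e ≠ 0 := zpow_ne_zero _ (by exact_mod_cast hp.out.ne_zero)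
  have hN : (iC n j : ℚ) ≠ 0 := Int.cast_ne_zero.mpr (iC_ne_zero hj0 hjn)
  have hD : (iC n k : ℚ) ≠ 0 := Int.cast_ne_zero.mpr (iC_ne_zero hk0 hkn)
  rw [iC_symm hk0 hkn, padicValRat.div (mul_ne_zero hpe hN) hD, padicValRat.mul hpe hN,
    padicValRat.zpow, padicValRat.self hp.out.one_lt, mul_one, padicValRat.of_int,
    padicValRat.of_int]

end Kummer

theorem stmt_13_general (p : ℕ) (hp : p.Prime)
    (b c m l s r : ℤ) (t d : ℕ)
    (ht : 2 ≤ t) (hcp : c ≤ (p : ℤ) - 1) (hmp : m ≤ (p : ℤ) - 1)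
    (hs : s = b + c * ((p : ℤ) - 1))
    (hr : r = s + (p : ℤ) ^ t * ((p : ℤ) - 1) * (d : ℤ))
    (hl0 : 0 ≤ l) (hlm : l ≤ m)
    (hbm0 : 0 ≤ b - m) (hbmc : b - m ≤ c) :
    ((0 ≤ l ∧ l ≤ m - c) → padicValInt p (iC (r - l) (b - m)) = 0) ∧
    ((m - c + 1 ≤ l ∧ l ≤ b - c) → padicValInt p (iC (r - l) (b - m)) = 1) ∧
    ((b - c + 1 ≤ l ∧ l ≤ b - c + p) → padicValInt p (iC (r - l) (b - m)) = 0) ∧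
    ((m = b - c ∧ 0 ≤ l ∧ l ≤ m - c) →
      padicValRat p ((p : ℚ) ^ (2 * m - b) * (iC (r - l) (b - m) : ℚ) /
        (iC (r - l) (r - m) : ℚ)) = 2 * m - b) ∧
    ((b - c + 1 ≤ m ∧ 0 ≤ l ∧ l ≤ m - c) →
      padicValRat p ((p : ℚ) ^ (2 * m - b) * (iC (r - l) (b - m) : ℚ) /
        (iC (r - l) (r - m) : ℚ)) = 2 * m - b - 1) ∧
    ((m = b - c ∧ m - c + 1 ≤ l ∧ l ≤ b - c) →
      padicValRat p ((p : ℚ) ^ (2 * m - b) * (iC (r - l) (b - m) : ℚ) /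
        (iC (r - l) (r - m) : ℚ)) = 2 * m - b + 1) ∧
    ((b - c + 1 ≤ m ∧ m - c + 1 ≤ l ∧ l ≤ b - c) →
      padicValRat p ((p : ℚ) ^ (2 * m - b) * (iC (r - l) (b - m) : ℚ) /
        (iC (r - l) (r - m) : ℚ)) = 2 * m - b) ∧
    ((b - c + 1 ≤ m ∧ b - c + 1 ≤ l ∧ l ≤ b - c + p) →
      padicValRat p ((p : ℚ) ^ (2 * m - b) * (iC (r - l) (b - m) : ℚ) /
        (iC (r - l) (r - m) : ℚ)) = 2 * m - b) := by
  have : Fact p.Prime := ⟨hp⟩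
  have hp2 := hp.two_le
  obtain ⟨t, rfl⟩ : ∃ t', t = t' + 2 := ⟨t - 2, by omega⟩
  set Q := c + p * ((p : ℤ) ^ t * (p - 1) * d) with hQ
  have hn : r - l = (b - c - l) + p * Q := by rw [hr, hs, hQ]; ring
  have hn' : r - l = (b - c - l + p) + p * (Q - 1) := by rw [hn]; ring
  have hcQ : c ≤ Q := le_add_of_nonneg_right <|
    mul_nonneg (by positivity) (mul_nonneg (mul_nonneg (by positivity) (by omega)) (by positivity))
  have hcpQ : c ≤ p * Q := by nlinarith
  have hpQ : 1 ≤ c → ¬ (p : ℤ) ∣ Q := fun hc hdvd => by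
    have := Int.le_of_dvd (by omega) ((dvd_add_left (dvd_mul_right _ _)).mp hdvd)
    omega
  have hN0 : l ≤ m - c → padicValInt p (iC (r - l) (b - m)) = 0 := fun _ =>
    hn ▸ padicValInt_iC_add_mul_of_le hbm0 (by omega) (by omega) (by omega)
  have hN1 : m - c + 1 ≤ l → l ≤ b - c → padicValInt p (iC (r - l) (b - m)) = 1 := fun _ _ =>
    hn ▸ padicValInt_iC_add_mul_of_lt (by omega) (by omega) (by omega) (by omega) (hpQ (by omega))
  have hN2 : b - c + 1 ≤ l → padicValInt p (iC (r - l) (b - m)) = 0 := fun _ =>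
    hn' ▸ padicValInt_iC_add_mul_of_le hbm0 (by omega) (by omega) (by omega)
  have hD0 : m = b - c → padicValInt p (iC (r - l) (m - l)) = 0 := fun _ =>
    hn ▸ padicValInt_iC_add_mul_of_le (by omega) (by omega) (by omega) (by omega)
  have hD1 : b - c + 1 ≤ m → l ≤ b - c → padicValInt p (iC (r - l) (m - l)) = 1 := fun _ _ =>
    hn ▸ padicValInt_iC_add_mul_of_lt (by omega) (by omega) (by omega) (by omega) (hpQ (by omega))
  have hD2 : b - c + 1 ≤ l → padicValInt p (iC (r - l) (m - l)) = 0 := fun _ =>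
    hn' ▸ padicValInt_iC_add_mul_of_le (by omega) (by omega) (by omega) (by omega)
  refine ⟨fun h => hN0 h.2, fun h => hN1 h.1 h.2, fun h => hN2 h.1, ?_, ?_, ?_, ?_, ?_⟩ <;>
    rintro ⟨h1, h2, h3⟩ <;>
    rw [show r - m = (r - l) - (m - l) by ring,
      padicValRat_zpow_mul_iC_div_iC _ (by omega) (by omega) (by omega) (by omega)]
  · rw [hN0 h3, hD0 h1]; simp
  · rw [hN0 h3, hD1 h1 (by omega)]; simp
  · rw [hN1 h2 h3, hD0 h1]; simp
  · rw [hN1 h2 h3, hD1 h1 h3]; simp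
  · rw [hN2 h2, hD2 h2]; simp

/-- **Lemma 3.6 (A).** Let `p` be an odd prime, `s = b + c(p−1)`, `r = s + p^t(p−1)d` with
`t ≥ 2`, `d ≥ 1`, `2 ≤ b ≤ p`, `0 ≤ c ≤ p−1`, `0 ≤ m ≤ p−1`, `s ≥ m`, `0 ≤ l ≤ m`, and
`0 ≤ b−m ≤ c`. Then `ν_p(C(r−l, b−m))` equals `0`, `1`, `0` on the listed ranges of `l`,
and the `p`-adic valuation of the rational number `p^{2m−b}·C(r−l, b−m)/C(r−l, r−m)` takes
the stated values in the five listed cases. -/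
theorem stmt_13 (p : ℕ) (hp : p.Prime) (hodd : Odd p)
    (b c m l s r : ℤ) (t d : ℕ)
    (ht : 2 ≤ t) (hd : 1 ≤ d)
    (hb2 : 2 ≤ b) (hbp : b ≤ (p : ℤ)) (hc0 : 0 ≤ c) (hcp : c ≤ (p : ℤ) - 1)
    (hm0 : 0 ≤ m) (hmp : m ≤ (p : ℤ) - 1)
    (hs : s = b + c * ((p : ℤ) - 1))
    (hr : r = s + (p : ℤ) ^ t * ((p : ℤ) - 1) * (d : ℤ))
    (hms : m ≤ s) (hl0 : 0 ≤ l) (hlm : l ≤ m)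
    (hbm0 : 0 ≤ b - m) (hbmc : b - m ≤ c) :
    ((0 ≤ l ∧ l ≤ m - c) → padicValInt p (iC (r - l) (b - m)) = 0) ∧
    ((m - c + 1 ≤ l ∧ l ≤ b - c) → padicValInt p (iC (r - l) (b - m)) = 1) ∧
    ((b - c + 1 ≤ l ∧ l ≤ b - c + p) → padicValInt p (iC (r - l) (b - m)) = 0) ∧
    ((m = b - c ∧ 0 ≤ l ∧ l ≤ m - c) →
      padicValRat p ((p : ℚ) ^ (2 * m - b) * (iC (r - l) (b - m) : ℚ) /
        (iC (r - l) (r - m) : ℚ)) = 2 * m - b) ∧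
    ((b - c + 1 ≤ m ∧ 0 ≤ l ∧ l ≤ m - c) →
      padicValRat p ((p : ℚ) ^ (2 * m - b) * (iC (r - l) (b - m) : ℚ) /
        (iC (r - l) (r - m) : ℚ)) = 2 * m - b - 1) ∧
    ((m = b - c ∧ m - c + 1 ≤ l ∧ l ≤ b - c) →
      padicValRat p ((p : ℚ) ^ (2 * m - b) * (iC (r - l) (b - m) : ℚ) /
        (iC (r - l) (r - m) : ℚ)) = 2 * m - b + 1) ∧
    ((b - c + 1 ≤ m ∧ m - c + 1 ≤ l ∧ l ≤ b - c) →
      padicValRat p ((p : ℚ) ^ (2 * m - b) * (iC (r - l) (b - m) : ℚ) /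
        (iC (r - l) (r - m) : ℚ)) = 2 * m - b) ∧
    ((b - c + 1 ≤ m ∧ b - c + 1 ≤ l ∧ l ≤ b - c + p) →
      padicValRat p ((p : ℚ) ^ (2 * m - b) * (iC (r - l) (b - m) : ℚ) /
        (iC (r - l) (r - m) : ℚ)) = 2 * m - b) :=
  stmt_13_general p hp b c m l s r t d ht hcp hmp hs hr hl0 hlm hbm0 hbmc
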